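/- arXiv:2403.10204 — 4 statements merged into one kernel-verified Lean document; each statement's English description precedes it below -/
import Mathlib

section
/- Let ρ > 0 be a constant such that for every finite set X ⊆ ℝ² and every finite set S ⊆ ℝ² one has Length(MST(X ∪ S)) ≥ ρ · Length(MST(X)) (i.e., ρ is a lower bound for the Steiner ratio of the Euclidean plane). Then for every finite set A ⊆ ℝ² containing at least two distinct points and every subset B ⊆ A, the MST-ratio satisfies μ(A,B) ≤ 2/ρ. In particular, the supremum over all finite A of the maximum over all B ⊆ A of the MST-ratio is at most 2/ρ. -/
/-- Points of the Euclidean plane. -/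
abbrev Pt := EuclideanSpace ℝ (Fin 2)

open Classical in
/-- Total edge weight of a graph `G` on the points of `S`, w.r.t. the distance function `d`
(each unordered edge counted once). -/
noncomputable def treeWeight {V : Type*} (d : V → V → ℝ) (S : Finset V)
    (G : SimpleGraph {x // x ∈ S}) : ℝ :=
  (1 / 2) * ∑ x : {x // x ∈ S}, ∑ y : {y // y ∈ S},
    if G.Adj x y then d x.1 y.1 else 0

/-- Length of a minimum spanning tree of the finite set `S`, w.r.t. distance `d`:
the infimum, over all spanning trees of the complete graph on `S` with edge weights given
by `d`, of the total edge weight.  It is `0` if `S` has at most one point. -/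
noncomputable def mstLengthF {V : Type*} (d : V → V → ℝ) (S : Finset V) : ℝ :=
  sInf {L : ℝ | ∃ G : SimpleGraph {x // x ∈ S}, G.IsTree ∧ L = treeWeight d S G}

open Classical in
/-- MST length for a set (`0` junk value for infinite sets). -/
noncomputable def mstLength {V : Type*} (d : V → V → ℝ) (S : Set V) : ℝ :=
  if h : S.Finite then mstLengthF d h.toFinset else 0

lemma mstLength_nonneg {V : Type*} (d : V → V → ℝ) (hd : ∀ x y, 0 ≤ d x y)
    (S : Set V) : 0 ≤ mstLength d S := by
  classical
  rw [mstLength]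
  split
  · apply Real.sInf_nonneg
    rintro L ⟨G, -, rfl⟩
    apply mul_nonneg (by norm_num)
    apply Finset.sum_nonneg
    intro x _
    apply Finset.sum_nonneg
    intro y _
    split
    · exact hd _ _
    · exact le_rfl
  · exact le_rfl

/-- The MST-ratio `μ(A,B) = (|MST(B)| + |MST(A \ B)|) / |MST(A)|`. -/
noncomputable def mstRatio {V : Type*} (d : V → V → ℝ) (A B : Set V) : ℝ :=
  (mstLength d B + mstLength d (A \ B)) / mstLength d A

/-- If `ρ > 0` is a lower bound for the Steiner ratio of the Euclidean plane, i.e.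
`|MST(X ∪ S)| ≥ ρ · |MST(X)|` for all finite `X, S ⊆ ℝ²`, then the MST-ratio of any
finite set `A` with at least two points and any `B ⊆ A` is at most `2/ρ`. -/
theorem mst_ratio_supmax_upper (ρ : ℝ) (hρ : 0 < ρ)
    (hSteiner : ∀ X S : Set Pt, X.Finite → S.Finite →
      ρ * mstLength dist X ≤ mstLength dist (X ∪ S)) :
    ∀ A : Set Pt, A.Finite → 2 ≤ A.ncard →
      ∀ B ⊆ A, mstRatio dist A B ≤ 2 / ρ := by
  intro A hA _ B hB
  have hBfin : B.Finite := hA.subset hB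
  have hCfin : (A \ B).Finite := hA.subset Set.diff_subset
  have h1 : ρ * mstLength dist B ≤ mstLength dist A := by
    have := hSteiner B (A \ B) hBfin hCfin
    rwa [Set.union_diff_cancel hB] at this
  have h2 : ρ * mstLength dist (A \ B) ≤ mstLength dist A := by
    have := hSteiner (A \ B) B hCfin hBfin
    rwa [Set.diff_union_of_subset hB] at this
  have ha : 0 ≤ mstLength dist A := mstLength_nonneg dist (fun x y => dist_nonneg) A
  rcases eq_or_lt_of_le ha with h | h
  · rw [mstRatio, ← h, div_zero]
    positivity
  · rw [mstRatio, div_le_div_iff₀ h hρ]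
    linarith
end

section
/- For every positive integer n and every finite set S ⊆ [0,n]² with at most n points, the length of the minimum spanning tree of S is at most 2n√n. -/
/-!
A minimum spanning tree is no longer than any path through all the points, and the path that
visits the points in increasing order of a function `κ` has length at most
`2 ∑ w + (max κ - min κ)` as soon as `dist p q ≤ w p + w q + |κ p - κ q|` on the set.

For `n ≥ 7`, cut the square into `m = ⌊√n⌋` horizontal strips of height `h = n / m` and take for
`κ` the arc length along a boustrophedon through the centre lines of the strips, and for `w p`
the vertical distance from `p` to the centre line of its strip. Averaging with the same bound
for the boustrophedon through the strip boundaries, whose vertical offsets add up with the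
former ones to `h / 2` at every point, gives `n (n + 2m² + 3m - 1) / (2m) ≤ 2n√n`.
For `n ≤ 6`, visit the four quadrants in cyclic order instead.
-/

open SimpleGraph Set

lemma Fin.sum_sum_ite_val_add_one_eq {M : Type*} [AddCommMonoid M] {k : ℕ}
    (f : Fin (k + 1) → Fin (k + 1) → M) :
    ∑ a, ∑ b, (if a.val + 1 = b.val then f a b else 0) = ∑ i : Fin k, f i.castSucc i.succ := by
  rw [Finset.sum_comm, Fin.sum_univ_succ]
  have h : ∀ (i : Fin k) (a : Fin (k + 1)), a.val + 1 = i.succ.val ↔ a = i.castSucc := by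
    intro i a; rw [Fin.ext_iff]; simp
  simp only [Fin.val_zero, Nat.add_one_ne_zero, if_false, Finset.sum_const_zero, zero_add, h,
    Finset.sum_ite_eq', Finset.mem_univ, if_true]

section MST

variable {V : Type*} [PseudoMetricSpace V]

lemma treeWeight_mono {S : Finset V} {G H : SimpleGraph {x // x ∈ S}} (hGH : G ≤ H) :
    treeWeight dist S G ≤ treeWeight dist S H := by
  unfold treeWeight
  gcongr with x _ y _
  split_ifs with hG hH
  · exact le_rfl
  · exact absurd (hGH hG) hH
  · exact dist_nonneg
  · exact le_rfl

lemma mstLengthF_le_treeWeight_of_connected {S : Finset V} {G : SimpleGraph {x // x ∈ S}}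
    (hG : G.Connected) : mstLengthF dist S ≤ treeWeight dist S G := by
  classical
  obtain ⟨T, hTG, hT⟩ := hG.exists_isTree_le
  have hbdd : BddBelow
      {L : ℝ | ∃ G : SimpleGraph {x // x ∈ S}, G.IsTree ∧ L = treeWeight dist S G} :=
    ((Set.finite_range (treeWeight dist S)).subset
      (by rintro _ ⟨G, -, rfl⟩; exact ⟨G, rfl⟩)).bddBelow
  exact (csInf_le hbdd ⟨T, hT, rfl⟩).trans (treeWeight_mono hTG)

lemma treeWeight_eq_sum_dist_succ {S : Finset V} {k : ℕ} (e : Fin (k + 1) ≃ {x // x ∈ S})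
    {G : SimpleGraph {x // x ∈ S}}
    (hG : ∀ a b, G.Adj (e a) (e b) ↔ (pathGraph (k + 1)).Adj a b) :
    treeWeight dist S G = ∑ i : Fin k, dist (e i.castSucc : V) (e i.succ) := by
  classical
  have hsplit : ∀ a b : Fin (k + 1), (if G.Adj (e a) (e b) then dist (e a : V) (e b) else 0) =
      (if a.val + 1 = b.val then dist (e a : V) (e b) else 0) +
        (if b.val + 1 = a.val then dist (e b : V) (e a) else 0) := by
    intro a b
    simp only [hG, pathGraph_adj]
    split_ifs <;> first | omega | (simp only [zero_add, add_zero]; try exact dist_comm _ _)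
  unfold treeWeight
  rw [← e.sum_comp]
  simp_rw [← e.sum_comp (fun y => if G.Adj _ y then _ else _), hsplit, Finset.sum_add_distrib]
  rw [Fin.sum_sum_ite_val_add_one_eq (fun a b => dist (e a : V) (e b)), Finset.sum_comm,
    Fin.sum_sum_ite_val_add_one_eq (fun a b => dist (e a : V) (e b))]
  ring

lemma mstLengthF_le_sum_dist_succ {S : Finset V} {k : ℕ} (e : Fin (k + 1) ≃ {x // x ∈ S}) :
    mstLengthF dist S ≤ ∑ i : Fin k, dist (e i.castSucc : V) (e i.succ) := by
  set G := (pathGraph (k + 1)).comap e.symm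
  have hG : G.Connected :=
    (pathGraph_connected k).map ⟨e, fun h => by simpa [G] using h⟩ e.surjective
  exact (mstLengthF_le_treeWeight_of_connected hG).trans_eq
    (treeWeight_eq_sum_dist_succ e fun a b => by simp [G])

theorem mstLengthF_le_of_dist_le {S : Finset V} (hS : S.Nonempty) (w κ : V → ℝ) {w₀ R : ℝ}
    (hw : ∀ p ∈ S, w₀ ≤ w p) (hR : ∀ p ∈ S, ∀ q ∈ S, κ q - κ p ≤ R)
    (hd : ∀ p ∈ S, ∀ q ∈ S, dist p q ≤ w p + w q + |κ p - κ q|) :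
    mstLengthF dist S ≤ 2 * ∑ p ∈ S, w p - 2 * w₀ + R := by
  obtain ⟨k, hk⟩ : ∃ k, S.card = k + 1 := Nat.exists_eq_add_one.mpr hS.card_pos
  let e₀ : Fin (k + 1) ≃ {x // x ∈ S} := (Fintype.equivFinOfCardEq (by simp [hk])).symm
  let e : Fin (k + 1) ≃ {x // x ∈ S} := (Tuple.sort fun i => κ (e₀ i)).trans e₀
  set W : Fin (k + 1) → ℝ := fun i => w (e i)
  set K : Fin (k + 1) → ℝ := fun i => κ (e i)
  have hK : Monotone K := Tuple.monotone_sort fun i => κ (e₀ i)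
  have hstep : ∀ i : Fin k, dist (e i.castSucc : V) (e i.succ) ≤
      W i.castSucc + W i.succ + (K i.succ - K i.castSucc) := by
    intro i
    have h := hd _ (e i.castSucc).2 _ (e i.succ).2
    rwa [abs_sub_comm, abs_of_nonneg (sub_nonneg.2 (hK (Fin.castSucc_le_succ i)))] at h
  have hW : ∑ i, W i = ∑ p ∈ S, w p := (e.sum_comp fun x => w x).trans (S.sum_coe_sort w)
  have hpath := (mstLengthF_le_sum_dist_succ e).trans (Finset.sum_le_sum fun i _ => hstep i)
  simp only [Finset.sum_add_distrib, Finset.sum_sub_distrib] at hpath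
  linarith [Fin.sum_univ_castSucc W, Fin.sum_univ_succ W, Fin.sum_univ_castSucc K,
    Fin.sum_univ_succ K, hw _ (e 0).2, hw _ (e (Fin.last k)).2, hR _ (e 0).2 _ (e (Fin.last k)).2]

end MST

lemma mstLengthF_empty {V : Type*} (d : V → V → ℝ) : mstLengthF d ∅ = 0 := by
  refine (congrArg sInf (Set.eq_empty_of_forall_notMem ?_)).trans Real.sInf_empty
  rintro L ⟨G, hG, -⟩
  obtain ⟨x⟩ := hG.connected.nonempty
  exact Finset.notMem_empty _ x.2

lemma dist_le_sqrt_of_abs_sub_le {p q : Pt} {a b : ℝ} (ha : |p 0 - q 0| ≤ a)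
    (hb : |p 1 - q 1| ≤ b) : dist p q ≤ √(a ^ 2 + b ^ 2) := by
  rw [EuclideanSpace.dist_eq, Fin.sum_univ_two, Real.dist_eq, Real.dist_eq]
  gcongr

lemma dist_le_abs_add_abs (p q : Pt) : dist p q ≤ |p 0 - q 0| + |p 1 - q 1| :=
  (dist_le_sqrt_of_abs_sub_le le_rfl le_rfl).trans <| Real.sqrt_le_iff.2
    ⟨by positivity, by nlinarith [abs_nonneg (p 0 - q 0), abs_nonneg (p 1 - q 1)]⟩

/-- Arc length, up to the point at abscissa `x` of its `j`-th horizontal segment, of the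
boustrophedon that crosses `[0, N]` alternately left-to-right and right-to-left and moves up
by `h` between consecutive crossings. -/
def snakeCoord (N h : ℝ) (j : ℕ) (x : ℝ) : ℝ :=
  j * (N + h) + if Even j then x else N - x

lemma abs_sub_add_mul_le_snakeCoord_sub {N h x x' : ℝ} {j j' : ℕ}
    (hx : x ∈ Icc 0 N) (hx' : x' ∈ Icc 0 N) (hjj' : j ≤ j') :
    |x - x'| + (j' - j : ℝ) * h ≤ |snakeCoord N h j' x' - snakeCoord N h j x| := by
  obtain ⟨hx0, hxN⟩ := hx
  obtain ⟨hx'0, hx'N⟩ := hx'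
  obtain rfl | rfl | hgap : j' = j ∨ j' = j + 1 ∨ j + 2 ≤ j' := by omega
  · rw [sub_self, zero_mul, add_zero]
    unfold snakeCoord
    split_ifs
    · rw [abs_sub_comm]; ring_nf; rfl
    · ring_nf; rfl
  all_goals
    refine le_trans ?_ (le_abs_self _)
    rw [← le_sub_iff_add_le, abs_sub_le_iff]
  · rcases Nat.even_or_odd j with hj | hj
    · simp only [snakeCoord, hj, Nat.even_add_one, not_true_eq_false, if_true, if_false]
      push_cast; constructor <;> linarith
    · simp only [snakeCoord, Nat.not_even_iff_odd.2 hj, Nat.even_add_one, not_false_eq_true,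
        if_true, if_false]
      push_cast; constructor <;> linarith
  · have hgap' : (2 : ℝ) ≤ j' - j := by
      have : ((j + 2 : ℕ) : ℝ) ≤ j' := by exact_mod_cast hgap
      push_cast at this; linarith
    have hN := mul_le_mul_of_nonneg_right hgap' (hx0.trans hxN)
    unfold snakeCoord
    split_ifs <;> constructor <;> linarith

lemma abs_sub_add_abs_mul_le_snakeCoord_sub {N h x x' : ℝ} (hx : x ∈ Icc 0 N)
    (hx' : x' ∈ Icc 0 N) (j j' : ℕ) :
    |x - x'| + |(j : ℝ) - j'| * h ≤ |snakeCoord N h j x - snakeCoord N h j' x'| := by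
  rcases le_total j j' with hjj' | hj'j
  · rw [abs_sub_comm (j : ℝ), abs_of_nonneg (sub_nonneg.2 (Nat.cast_le.2 hjj')),
      abs_sub_comm (snakeCoord ..)]
    exact abs_sub_add_mul_le_snakeCoord_sub hx hx' hjj'
  · rw [abs_of_nonneg (sub_nonneg.2 (Nat.cast_le.2 hj'j)), abs_sub_comm x]
    exact abs_sub_add_mul_le_snakeCoord_sub hx' hx hj'j

lemma dist_le_abs_sub_add_abs_sub_add_snakeCoord {N h c : ℝ} {p q : Pt} (hh : 0 ≤ h)
    (hp : ∀ i, p i ∈ Icc 0 N) (hq : ∀ i, q i ∈ Icc 0 N) (j j' : ℕ) :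
    dist p q ≤ |p 1 - (j * h + c)| + |q 1 - (j' * h + c)| +
      |snakeCoord N h j (p 0) - snakeCoord N h j' (q 0)| := by
  have hlines : |(j * h + c) - (j' * h + c)| = |(j : ℝ) - j'| * h := by
    rw [← sub_sub_sub_cancel_right _ _ c, add_sub_cancel_right, add_sub_cancel_right, ← sub_mul,
      abs_mul, abs_of_nonneg hh]
  linarith [abs_sub_le (p 1) (j * h + c) (q 1), abs_sub_le (j * h + c) (j' * h + c) (q 1),
    abs_sub_comm (j' * h + c) (q 1), dist_le_abs_add_abs p q,
    abs_sub_add_abs_mul_le_snakeCoord_sub (h := h) (hp 0) (hq 0) j j']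

lemma snakeCoord_mem_Icc {N h x : ℝ} (hh : 0 ≤ h) (hx : x ∈ Icc 0 N) {j : ℕ} {J : ℝ}
    (hj : (j : ℝ) ≤ J) : snakeCoord N h j x ∈ Icc 0 (J * (N + h) + N) := by
  obtain ⟨hx0, hxN⟩ := hx
  have hNh : 0 ≤ N + h := by linarith
  have := mul_le_mul_of_nonneg_right hj hNh
  unfold snakeCoord
  constructor <;> split_ifs <;> nlinarith [Nat.cast_nonneg (α := ℝ) j]

theorem mstLengthF_le_snake {S : Finset Pt} (hS : S.Nonempty) {N : ℝ}
    (hSN : ∀ p ∈ S, ∀ i, p i ∈ Icc 0 N) {h : ℝ} (hh : 0 ≤ h) (c : ℝ) (j : Pt → ℕ) {J : ℝ}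
    (hj : ∀ p ∈ S, (j p : ℝ) ≤ J) :
    mstLengthF dist S ≤ 2 * ∑ p ∈ S, |p 1 - (j p * h + c)| + (J * (N + h) + N) := by
  have hκ : ∀ p ∈ S, snakeCoord N h (j p) (p 0) ∈ Icc 0 (J * (N + h) + N) :=
    fun p hp => snakeCoord_mem_Icc hh (hSN p hp 0) (hj p hp)
  have := mstLengthF_le_of_dist_le hS (fun p => |p 1 - (j p * h + c)|)
    (fun p => snakeCoord N h (j p) (p 0)) (w₀ := 0) (R := J * (N + h) + N)
    (fun p _ => abs_nonneg _)
    (fun p hp q hq => by linarith [(hκ p hp).1, (hκ q hq).2])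
    (fun p hp q hq => dist_le_abs_sub_add_abs_sub_add_snakeCoord hh (hSN p hp) (hSN q hq) _ _)
  linarith

lemma exists_strip_indices {h y : ℝ} (hh : 0 < h) {m : ℕ} (hm : 1 ≤ m)
    (hy : y ∈ Icc 0 (m * h)) :
    ∃ i j : ℕ, i + 1 ≤ m ∧ j ≤ m ∧ |y - (i * h + h / 2)| + |y - j * h| ≤ h / 2 := by
  obtain ⟨i, him, hiy, hyi⟩ : ∃ i : ℕ, i + 1 ≤ m ∧ i * h ≤ y ∧ y ≤ (i + 1) * h := by
    rcases hy.2.lt_or_eq with hlt | heq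
    · have hy0 : 0 ≤ y / h := div_nonneg hy.1 hh.le
      refine ⟨⌊y / h⌋₊, ?_, (le_div_iff₀ hh).1 (Nat.floor_le hy0),
        (div_le_iff₀ hh).1 (Nat.lt_floor_add_one _).le⟩
      have := (Nat.floor_lt hy0).2 ((div_lt_iff₀ hh).2 hlt)
      omega
    · refine ⟨m - 1, by omega, ?_, ?_⟩ <;> rw [heq, Nat.cast_sub hm] <;> push_cast <;>
        nlinarith
  rcases le_total y (i * h + h / 2) with hmid | hmid
  · refine ⟨i, i, him, by omega, ?_⟩
    rw [abs_of_nonpos (by linarith), abs_of_nonneg (by linarith)]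
    linarith
  · refine ⟨i, i + 1, him, him, ?_⟩
    push_cast
    rw [abs_of_nonneg (by linarith), abs_of_nonpos (by linarith)]
    linarith

theorem mstLengthF_le_strips {S : Finset Pt} (hS : S.Nonempty) {N : ℝ} (hN : 0 < N)
    (hSN : ∀ p ∈ S, ∀ i, p i ∈ Icc 0 N) {m : ℕ} (hm : 1 ≤ m) :
    mstLengthF dist S ≤ N * (S.card + 2 * m ^ 2 + 3 * m - 1) / (2 * m) := by
  set h := N / m
  have hm0 : (0 : ℝ) < m := by exact_mod_cast hm
  have hh : 0 < h := div_pos hN hm0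
  have hmh : (m : ℝ) * h = N := mul_div_cancel₀ _ hm0.ne'
  choose! a b ha hb hab using fun p (hp : p ∈ S) =>
    exists_strip_indices hh hm (y := p 1) (by rw [hmh]; exact hSN p hp 1)
  have hA := mstLengthF_le_snake hS hSN hh.le (h / 2) a (J := m - 1) fun p hp => by
    have : ((a p + 1 : ℕ) : ℝ) ≤ m := Nat.cast_le.2 (ha p hp)
    push_cast at this
    linarith
  have hB := mstLengthF_le_snake hS hSN hh.le 0 b (J := m) fun p hp => Nat.cast_le.2 (hb p hp)
  simp only [add_zero] at hB
  have hsum := Finset.sum_le_sum hab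
  rw [Finset.sum_add_distrib, Finset.sum_const, nsmul_eq_mul] at hsum
  have hsnakes : 2 * mstLengthF dist S ≤ S.card * h + (2 * m - 1) * (N + h) + 2 * N := by
    linarith
  rw [le_div_iff₀ (by positivity)]
  linear_combination (m : ℝ) * hsnakes + (S.card + 2 * m - 1 : ℝ) * hmh

lemma strip_bound_le_two_mul_mul_sqrt {n k : ℕ} (hn : 7 ≤ n) (hk : k ≤ n) :
    (n : ℝ) * (k + 2 * n.sqrt ^ 2 + 3 * n.sqrt - 1) / (2 * n.sqrt) ≤ 2 * n * √n := by
  have hm0 : (0 : ℝ) < n.sqrt := by exact_mod_cast Nat.sqrt_pos.2 (by omega)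
  have hms : (n.sqrt : ℝ) ≤ √n := Real.nat_sqrt_le_real_sqrt
  have hsm : √n < n.sqrt + 1 := Real.real_sqrt_lt_nat_sqrt_succ
  have hs := Real.sq_sqrt (Nat.cast_nonneg (α := ℝ) n)
  have hs7 : (7 : ℝ) ≤ √n ^ 2 := by rw [hs]; exact_mod_cast hn
  have hs26 : 2.6 ≤ √n := by nlinarith [Real.sqrt_nonneg n]
  have hkn : (k : ℝ) ≤ n := by exact_mod_cast hk
  -- with `θ = √n - ⌊√n⌋ ∈ [0, 1)` the slack is `(n - 3√n + 1) + θ (3 - 2θ)`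
  have key : (n : ℝ) + 2 * n.sqrt ^ 2 + 3 * n.sqrt - 1 ≤ 4 * n.sqrt * √n := by
    nlinarith [mul_nonneg (sub_nonneg.2 hms) (by linarith : (0 : ℝ) ≤ 3 - 2 * (√n - n.sqrt)),
      mul_nonneg (sub_nonneg.2 hs26) (by linarith : (0 : ℝ) ≤ √n - 0.4)]
  calc (n : ℝ) * (k + 2 * n.sqrt ^ 2 + 3 * n.sqrt - 1) / (2 * n.sqrt)
      ≤ n * (4 * n.sqrt * √n) / (2 * n.sqrt) := by gcongr; linarith
    _ = 2 * n * √n := by field_simp; ring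

-- side-adjacent quadrants get indices differing by 1 or 3, opposite ones by 2
def grayIndex : Bool → Bool → ℕ
  | false, false => 0
  | true, false => 1
  | true, true => 2
  | false, true => 3

lemma grayIndex_le_three (u v : Bool) : grayIndex u v ≤ 3 := by
  cases u <;> cases v <;> decide

lemma sqrt_le_grayIndex (u v u' v' : Bool) :
    √((if u = u' then 1 else 2) ^ 2 + (if v = v' then 1 else 2) ^ 2) ≤
      √2 + (√5 - √2) * |(grayIndex u v : ℝ) - grayIndex u' v'| := by
  have h25 : √2 ≤ √5 := Real.sqrt_le_sqrt (by norm_num)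
  have h8 : √8 ≤ 2 * √5 - √2 := by
    rw [show (8 : ℝ) = 2 ^ 2 * 2 by norm_num, Real.sqrt_mul' _ (by norm_num),
      Real.sqrt_sq (by norm_num)]
    nlinarith [Real.sq_sqrt (show (0 : ℝ) ≤ 2 by norm_num),
      Real.sq_sqrt (show (0 : ℝ) ≤ 5 by norm_num), Real.sqrt_nonneg 2, Real.sqrt_nonneg 5]
  cases u <;> cases v <;> cases u' <;> cases v' <;> norm_num [grayIndex] <;> linarith

lemma abs_sub_le_of_mem_Icc {N x x' : ℝ} (hx : x ∈ Icc 0 N) (hx' : x' ∈ Icc 0 N) :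
    |x - x'| ≤ N / 2 * (if decide (N / 2 < x) = decide (N / 2 < x') then 1 else 2) := by
  obtain ⟨hx0, hxN⟩ := hx
  obtain ⟨hx'0, hx'N⟩ := hx'
  rw [abs_sub_le_iff]
  by_cases h : N / 2 < x <;> by_cases h' : N / 2 < x' <;>
    simp only [h, h', decide_true, decide_false, Bool.true_eq_false, Bool.false_eq_true,
      ↓reduceIte] <;>
    constructor <;> linarith

noncomputable def quadrantIndex (N : ℝ) (p : Pt) : ℕ :=
  grayIndex (decide (N / 2 < p 0)) (decide (N / 2 < p 1))

lemma dist_le_quadrantIndex {N : ℝ} {p q : Pt} (hp : ∀ i, p i ∈ Icc 0 N)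
    (hq : ∀ i, q i ∈ Icc 0 N) :
    dist p q ≤ N / 2 * (√2 + (√5 - √2) * |(quadrantIndex N p : ℝ) - quadrantIndex N q|) := by
  have hN : 0 ≤ N / 2 := by linarith [(hp 0).1, (hp 0).2]
  have h := dist_le_sqrt_of_abs_sub_le (abs_sub_le_of_mem_Icc (hp 0) (hq 0))
    (abs_sub_le_of_mem_Icc (hp 1) (hq 1))
  rw [mul_pow, mul_pow, ← mul_add, Real.sqrt_mul (sq_nonneg _), Real.sqrt_sq hN] at h
  exact h.trans (mul_le_mul_of_nonneg_left (sqrt_le_grayIndex ..) hN)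

theorem mstLengthF_le_quadrants {S : Finset Pt} (hS : S.Nonempty) {N : ℝ}
    (hSN : ∀ p ∈ S, ∀ i, p i ∈ Icc 0 N) :
    mstLengthF dist S ≤ (S.card - 1) * (N / 2 * √2) + 3 * (N / 2 * (√5 - √2)) := by
  obtain ⟨p₀, hp₀⟩ := hS
  have hc : 0 ≤ N / 2 * (√5 - √2) :=
    mul_nonneg (by linarith [(hSN p₀ hp₀ 0).1, (hSN p₀ hp₀ 0).2])
      (sub_nonneg.2 (Real.sqrt_le_sqrt (by norm_num)))
  have hq : ∀ p, (quadrantIndex N p : ℝ) ≤ 3 := fun p => by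
    exact_mod_cast grayIndex_le_three _ _
  have := mstLengthF_le_of_dist_le ⟨p₀, hp₀⟩ (fun _ => N / 2 * √2 / 2)
    (fun p => N / 2 * (√5 - √2) * quadrantIndex N p) (w₀ := N / 2 * √2 / 2)
    (R := 3 * (N / 2 * (√5 - √2))) (fun _ _ => le_rfl)
    (fun p _ q _ => by nlinarith [hq q, Nat.cast_nonneg (α := ℝ) (quadrantIndex N p)])
    (fun p hp q hq => by
      rw [← mul_sub, abs_mul, abs_of_nonneg hc]
      linarith [dist_le_quadrantIndex (hSN p hp) (hSN q hq)])
  rw [Finset.sum_const, nsmul_eq_mul] at this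
  linarith

lemma quadrant_bound_le_two_mul_mul_sqrt {n k : ℕ} (hn : n ≤ 6) (hk : k ≤ n) :
    ((k : ℝ) - 1) * (n / 2 * √2) + 3 * (n / 2 * (√5 - √2)) ≤ 2 * n * √n := by
  have hk' : ((k : ℝ) - 1) * (n / 2 * √2) ≤ ((n : ℝ) - 1) * (n / 2 * √2) := by gcongr
  suffices ((n : ℝ) - 1) * (n / 2 * √2) + 3 * (n / 2 * (√5 - √2)) ≤ 2 * n * √n by linarith
  have h2 : 1.414 < √2 := by rw [Real.lt_sqrt (by norm_num)]; norm_num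
  have h2' : √2 < 1.415 := by rw [Real.sqrt_lt' (by norm_num)]; norm_num
  have h5 : 2.236 < √5 := by rw [Real.lt_sqrt (by norm_num)]; norm_num
  have h5' : √5 < 2.237 := by rw [Real.sqrt_lt' (by norm_num)]; norm_num
  have hn' := Real.sq_sqrt (Nat.cast_nonneg (α := ℝ) n)
  have := Real.sqrt_nonneg n
  interval_cases n <;>
    simp only [Nat.cast_ofNat, Nat.cast_one, Nat.cast_zero] at hn' this ⊢ <;> nlinarith

theorem mst_in_square_upper_bound_general (n : ℕ) (S : Set Pt) (hS : S.Finite)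
    (hcard : S.ncard ≤ n) (hsq : ∀ p ∈ S, ∀ i : Fin 2, p i ∈ Set.Icc (0 : ℝ) n) :
    mstLength dist S ≤ 2 * n * Real.sqrt n := by
  rw [mstLength, dif_pos hS]
  have hF : ∀ p ∈ hS.toFinset, ∀ i, p i ∈ Icc (0 : ℝ) n :=
    fun p hp => hsq p (hS.mem_toFinset.1 hp)
  have hFn : hS.toFinset.card ≤ n := by rwa [← Set.ncard_eq_toFinset_card S hS]
  rcases hS.toFinset.eq_empty_or_nonempty with hF0 | hFne
  · rw [hF0, mstLengthF_empty]
    positivity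
  rcases le_or_gt n 6 with hn6 | hn7
  · exact (mstLengthF_le_quadrants hFne hF).trans (quadrant_bound_le_two_mul_mul_sqrt hn6 hFn)
  · exact (mstLengthF_le_strips hFne (by positivity) hF (Nat.sqrt_pos.2 (by omega))).trans
      (strip_bound_le_two_mul_mul_sqrt hn7 hFn)

/-- The minimum spanning tree of any `n` or fewer points in the square `[0,n]²` has length
at most `2n√n`. -/
theorem mst_in_square_upper_bound (n : ℕ) (hn : 0 < n) (S : Set Pt) (hS : S.Finite)
    (hcard : S.ncard ≤ n) (hsq : ∀ p ∈ S, ∀ i : Fin 2, p i ∈ Set.Icc (0 : ℝ) n) :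
    mstLength dist S ≤ 2 * n * Real.sqrt n :=
  mst_in_square_upper_bound_general n S hS hcard hsq
end

section
/- Let L = L(u,v) be a lattice spanned by linearly independent u, v ∈ ℝ² with ‖u‖ = 1 and ‖v‖ = ν ≥ 1, such that ‖x‖ ≥ 1 for every nonzero x ∈ L and ‖x‖ ≥ ν for every x ∈ L not in ℤu. Then for every positive integer n, the set L_n = { αu + βv : α, β ∈ {0,1,…,n} } of (n+1)² points has minimum spanning tree of length exactly (n+1)n + nν. -/
/-- The lattice spanned by `u` and `v`. -/
def latticeSet (u v : Pt) : Set Pt := {x | ∃ i j : ℤ, x = i • u + j • v}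

/-- The portion `{αu + βv : 0 ≤ α, β ≤ n}` of the lattice spanned by `u` and `v`. -/
def latticeBox (u v : Pt) (n : ℕ) : Set Pt :=
  {x | ∃ α β : ℕ, α ≤ n ∧ β ≤ n ∧ x = (α : ℝ) • u + (β : ℝ) • v}

/-!
The upper bound is the comb: the `n + 1` rows `{αu + βv : α ≤ n}` (`β` fixed) are paths of
`u`-steps, joined by the column `α = 0` of `v`-steps, for a total of `(n + 1)n + nν`.
For the lower bound colour each point by its row `β`. Every edge of a spanning tree has length
at least `1`, and an edge between different rows is a lattice vector outside `ℤu`, so it has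
length at least `ν`. Collapsing the colour classes maps the tree onto a connected graph on the
`n + 1` rows, so at least `n` of the `(n + 1)² - 1` tree edges join different rows.
-/

open Finset Function SimpleGraph

namespace SimpleGraph

variable {V W : Type*}

lemma sum_sum_ite_adj_eq_two_mul_sum_edgeFinset [Fintype V] (G : SimpleGraph V)
    [DecidableRel G.Adj] (w : Sym2 V → ℝ) :
    ∑ x, ∑ y, (if G.Adj x y then w s(x, y) else 0) = 2 * ∑ e ∈ G.edgeFinset, w e := by
  classical
  calc ∑ x, ∑ y, (if G.Adj x y then w s(x, y) else 0)
      = ∑ p : V × V with G.Adj p.1 p.2, w s(p.1, p.2) := by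
        rw [sum_filter, ← Fintype.sum_prod_type']
    _ = ∑ d : G.Dart, w d.edge := by
        refine sum_bij' (fun p hp ↦ ⟨p, (mem_filter.1 hp).2⟩) (fun d _ ↦ d.toProd)
          ?_ ?_ ?_ ?_ ?_ <;> simp
    _ = ∑ e ∈ G.edgeFinset, ∑ d : G.Dart with d.edge = e, w e :=
        (sum_fiberwise_of_maps_to' (fun d _ ↦ mem_edgeFinset.2 d.edge_mem) w).symm
    _ = 2 * ∑ e ∈ G.edgeFinset, w e := by
        rw [mul_sum]
        refine sum_congr rfl fun e he ↦ ?_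
        rw [sum_const, G.dart_edge_fiber_card e (mem_edgeFinset.1 he), two_smul, two_mul]

lemma Reachable.map_fun {G : SimpleGraph V} (f : V → W) {x y : V} (h : G.Reachable x y) :
    (G.map f).Reachable (f x) (f y) := by
  obtain ⟨p⟩ := h
  induction p with
  | nil => rfl
  | @cons a b _ hab _ ih =>
    refine Reachable.trans ?_ ih
    by_cases hf : f a = f b
    · rw [hf]
    · exact (map_adj_apply' hab hf).reachable

lemma Connected.map_of_surjective {G : SimpleGraph V} (hG : G.Connected) {f : V → W}
    (hf : Surjective f) : (G.map f).Connected :=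
  have := hG.nonempty.map f
  ⟨hf.forall₂.2 fun x y ↦ (hG.preconnected x y).map_fun f⟩

lemma Connected.card_le_card_filter_not_isDiag_add_one [Fintype V] [Fintype W] [DecidableEq W]
    {G : SimpleGraph V} [Fintype G.edgeSet] (hG : G.Connected) {f : V → W}
    (hf : Surjective f) :
    Fintype.card W ≤ #{e ∈ G.edgeFinset | ¬ (e.map f).IsDiag} + 1 := by
  classical
  have hmap : (G.map f).edgeFinset ⊆
      {e ∈ G.edgeFinset | ¬ (e.map f).IsDiag}.image (Sym2.map f) := by
    intro e he
    induction e with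
    | _ a b =>
      obtain ⟨hab, x, y, hxy, rfl, rfl⟩ := mem_edgeFinset.1 he
      exact mem_image.2 ⟨s(x, y), by simpa [hxy], rfl⟩
  calc Fintype.card W ≤ #(G.map f).edgeFinset + 1 := by
        have h := (hG.map_of_surjective hf).card_vert_le_card_edgeSet_add_one
        rwa [Nat.card_eq_fintype_card, Nat.card_eq_fintype_card, ← edgeFinset_card] at h
    _ ≤ _ := by gcongr; exact (card_le_card hmap).trans card_image_le

lemma IsTree.le_sum_edgeFinset [Fintype V] [Fintype W] {G : SimpleGraph V} [Fintype G.edgeSet]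
    (hG : G.IsTree) {f : V → W} (hf : Surjective f) {w : Sym2 V → ℝ} {a b : ℝ}
    (hab : a ≤ b) (ha : ∀ e ∈ G.edgeSet, a ≤ w e)
    (hb : ∀ e ∈ G.edgeSet, ¬ (e.map f).IsDiag → b ≤ w e) :
    ((Fintype.card V : ℝ) - 1) * a + ((Fintype.card W : ℝ) - 1) * (b - a) ≤
      ∑ e ∈ G.edgeFinset, w e := by
  classical
  set cross := {e ∈ G.edgeFinset | ¬ (e.map f).IsDiag}
  have hV : (#G.edgeFinset : ℝ) = Fintype.card V - 1 := by
    rw [← hG.card_edgeFinset]; push_cast; ring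
  have hW : (Fintype.card W : ℝ) ≤ #cross + 1 := by
    exact_mod_cast hG.connected.card_le_card_filter_not_isDiag_add_one hf
  calc ((Fintype.card V : ℝ) - 1) * a + ((Fintype.card W : ℝ) - 1) * (b - a)
      ≤ #G.edgeFinset * a + #cross * (b - a) := by
        rw [hV]; gcongr; linarith
    _ = ∑ e ∈ G.edgeFinset, (a + if (e.map f).IsDiag then 0 else b - a) := by
        rw [sum_add_distrib, sum_ite, sum_const_zero, zero_add, sum_const, sum_const]
        simp [cross, mul_comm]
    _ ≤ ∑ e ∈ G.edgeFinset, w e := by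
        refine sum_le_sum fun e he ↦ ?_
        have he := mem_edgeFinset.1 he
        split_ifs with hd
        · linarith [ha e he]
        · linarith [hb e he hd]

def parentGraph (root : V) (parent : V → V) : SimpleGraph V :=
  fromRel fun x y ↦ x ≠ root ∧ y = parent x

section parentGraph

variable {root : V} {parent : V → V} {rank : V → ℕ}
  (hrank : ∀ x ≠ root, rank (parent x) < rank x)
include hrank

lemma parentGraph_adj_parent {x : V} (hx : x ≠ root) :
    (parentGraph root parent).Adj x (parent x) :=
  ⟨fun h ↦ (hrank x hx).ne (congrArg rank h.symm), .inl ⟨hx, rfl⟩⟩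

lemma parentGraph_reachable_root (x : V) : (parentGraph root parent).Reachable x root := by
  induction hx : rank x using Nat.strong_induction_on generalizing x with
  | _ k ih =>
    by_cases h : x = root
    · rw [h]
    · exact (parentGraph_adj_parent hrank h).reachable.trans (ih _ (hx ▸ hrank x h) _ rfl)

lemma edgeSet_parentGraph :
    (parentGraph root parent).edgeSet = (fun x ↦ s(x, parent x)) '' {x | x ≠ root} := by
  ext e
  induction e with
  | _ x y =>
    simp only [mem_edgeSet, Set.mem_image, Set.mem_ofPred_eq]
    constructor
    · rintro ⟨-, ⟨hx, rfl⟩ | ⟨hy, rfl⟩⟩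
      · exact ⟨x, hx, rfl⟩
      · exact ⟨y, hy, Sym2.eq_swap⟩
    · rintro ⟨z, hz, hzxy⟩
      rcases Sym2.eq_iff.1 hzxy with ⟨rfl, rfl⟩ | ⟨rfl, rfl⟩
      · exact parentGraph_adj_parent hrank hz
      · exact (parentGraph_adj_parent hrank hz).symm

lemma injOn_sym2_mk_parent : Set.InjOn (fun x ↦ s(x, parent x)) {x | x ≠ root} := by
  intro x hx y hy hxy
  rcases Sym2.eq_iff.1 hxy with ⟨h, -⟩ | ⟨hxy, hyx⟩
  · exact h
  · have := hrank x hx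
    have := hrank y hy
    rw [hxy, hyx] at *
    omega

lemma edgeFinset_parentGraph [Fintype V] [DecidableEq V]
    [Fintype (parentGraph root parent).edgeSet] :
    (parentGraph root parent).edgeFinset = (univ.erase root).image fun x ↦ s(x, parent x) := by
  rw [← coe_inj, coe_edgeFinset, edgeSet_parentGraph hrank, coe_image]
  congr 1
  ext; simp

lemma parentGraph_isTree [Finite V] : (parentGraph root parent).IsTree := by
  classical
  have := Fintype.ofFinite V
  have : Nonempty V := ⟨root⟩
  refine isTree_iff_connected_and_card.2 ⟨?_, ?_⟩
  · exact .mk fun x y ↦ (parentGraph_reachable_root hrank x).trans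
      (parentGraph_reachable_root hrank y).symm
  · rw [Nat.card_eq_fintype_card, ← edgeFinset_card, edgeFinset_parentGraph hrank,
      card_image_of_injOn, card_erase_of_mem (mem_univ _), card_univ, Nat.card_eq_fintype_card]
    · exact Nat.sub_add_cancel Fintype.card_pos
    · exact (injOn_sym2_mk_parent hrank).mono fun x hx ↦ (mem_erase.1 hx).1

lemma sum_edgeFinset_parentGraph [Fintype V] [DecidableEq V]
    [Fintype (parentGraph root parent).edgeSet] (w : Sym2 V → ℝ) :
    ∑ e ∈ (parentGraph root parent).edgeFinset, w e =
      ∑ x ∈ univ.erase root, w s(x, parent x) := by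
  rw [edgeFinset_parentGraph hrank, sum_image]
  exact (injOn_sym2_mk_parent hrank).mono fun x hx ↦ (mem_erase.1 hx).1

end parentGraph

end SimpleGraph

noncomputable def edgeLength {ι P : Type*} [PseudoMetricSpace P] (f : ι → P) :
    Sym2 ι → ℝ :=
  Sym2.lift ⟨fun i j ↦ dist (f i) (f j), fun _ _ ↦ dist_comm _ _⟩

@[simp]
lemma edgeLength_mk {ι P : Type*} [PseudoMetricSpace P] (f : ι → P) (i j : ι) :
    edgeLength f s(i, j) = dist (f i) (f j) :=
  rfl

section mst

variable {ι P : Type*} [Fintype ι] [PseudoMetricSpace P]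

open Classical in
lemma treeWeight_eq_sum_edgeFinset_comap {S : Finset P} (e : ι ≃ S) (G : SimpleGraph S) :
    treeWeight dist S G = ∑ x ∈ (G.comap e).edgeFinset, edgeLength (fun i ↦ (e i : P)) x := by
  calc treeWeight dist S G
      = 1 / 2 * ∑ i, ∑ j,
          if (G.comap e).Adj i j then edgeLength (fun i ↦ (e i : P)) s(i, j) else 0 := by
        rw [treeWeight, ← e.sum_comp]
        simp_rw [← e.sum_comp]
        rfl
    _ = _ := by
        rw [sum_sum_ite_adj_eq_two_mul_sum_edgeFinset]
        ring

open Classical in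
lemma mstLength_range_eq_sInf {f : ι → P} (hf : Injective f) :
    mstLength dist (Set.range f) =
      sInf {L | ∃ G : SimpleGraph ι, G.IsTree ∧
        L = ∑ e ∈ G.edgeFinset, edgeLength f e} := by
  set S := (Set.finite_range f).toFinset
  let e : ι ≃ S := .ofBijective (fun i ↦ ⟨f i, by simp [S]⟩)
    ⟨fun i j h ↦ hf (congrArg Subtype.val h),
      fun ⟨x, hx⟩ ↦ by simpa [S, Subtype.ext_iff] using hx⟩
  rw [mstLength, dif_pos (Set.finite_range f), mstLengthF]
  congr 1
  ext L
  constructor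
  · rintro ⟨G, hG, rfl⟩
    exact ⟨G.comap e, (Iso.comap e G).isTree_iff.2 hG, treeWeight_eq_sum_edgeFinset_comap e G⟩
  · rintro ⟨H, hH, rfl⟩
    refine ⟨H.comap e.symm, (Iso.comap e.symm H).isTree_iff.2 hH, ?_⟩
    rw [treeWeight_eq_sum_edgeFinset_comap e]
    have : (H.comap e.symm).comap e = H := by ext; simp
    congr 1
    ext x
    rw [mem_edgeFinset, mem_edgeFinset, this]

end mst

section latticeBox

variable {u v : Pt} {n : ℕ}

def boxPoint (u v : Pt) (n : ℕ) (p : Fin (n + 1) × Fin (n + 1)) : Pt :=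
  ((p.1 : ℕ) : ℝ) • u + ((p.2 : ℕ) : ℝ) • v

lemma latticeBox_eq_range : latticeBox u v n = Set.range (boxPoint u v n) := by
  ext x
  constructor
  · rintro ⟨α, β, hα, hβ, rfl⟩
    exact ⟨(⟨α, by omega⟩, ⟨β, by omega⟩), rfl⟩
  · rintro ⟨p, rfl⟩
    exact ⟨p.1, p.2, Nat.le_of_lt_succ p.1.2, Nat.le_of_lt_succ p.2.2, rfl⟩

lemma boxPoint_injective (hli : LinearIndependent ℝ ![u, v]) :
    Injective (boxPoint u v n) := by
  intro p q h
  obtain ⟨h₁, h₂⟩ := hli.eq_of_pair h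
  exact Prod.ext (Fin.ext (by exact_mod_cast h₁)) (Fin.ext (by exact_mod_cast h₂))

lemma boxPoint_sub_mem_latticeSet (p q : Fin (n + 1) × Fin (n + 1)) :
    boxPoint u v n p - boxPoint u v n q ∈ latticeSet u v := by
  refine ⟨(p.1 : ℕ) - (q.1 : ℕ), (p.2 : ℕ) - (q.2 : ℕ), ?_⟩
  rw [← Int.cast_smul_eq_zsmul ℝ, ← Int.cast_smul_eq_zsmul ℝ, boxPoint, boxPoint]
  push_cast
  module

lemma one_le_dist_boxPoint (hli : LinearIndependent ℝ ![u, v])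
    (hushort : ∀ x ∈ latticeSet u v, x ≠ 0 → 1 ≤ ‖x‖)
    {p q : Fin (n + 1) × Fin (n + 1)} (hpq : p ≠ q) :
    1 ≤ dist (boxPoint u v n p) (boxPoint u v n q) := by
  rw [dist_eq_norm]
  exact hushort _ (boxPoint_sub_mem_latticeSet p q)
    (sub_ne_zero.2 ((boxPoint_injective hli).ne hpq))

lemma le_dist_boxPoint_of_snd_ne {ν : ℝ} (hli : LinearIndependent ℝ ![u, v])
    (hvshort : ∀ x ∈ latticeSet u v, (∀ i : ℤ, x ≠ i • u) → ν ≤ ‖x‖)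
    {p q : Fin (n + 1) × Fin (n + 1)} (hpq : p.2 ≠ q.2) :
    ν ≤ dist (boxPoint u v n p) (boxPoint u v n q) := by
  rw [dist_eq_norm]
  refine hvshort _ (boxPoint_sub_mem_latticeSet p q) fun i hi ↦ hpq ?_
  have : ((p.1 : ℕ) : ℝ) • u + ((p.2 : ℕ) : ℝ) • v =
      ((q.1 : ℕ) + (i : ℝ)) • u + ((q.2 : ℕ) : ℝ) • v := by
    rw [← Int.cast_smul_eq_zsmul ℝ, boxPoint, boxPoint, sub_eq_iff_eq_add] at hi
    rw [hi]
    module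
  exact Fin.ext (by exact_mod_cast (hli.eq_of_pair this).2)

-- `Fin` subtraction wraps around at `0`; this only affects the root `0`, which has no parent edge.
def combParent (p : Fin (n + 1) × Fin (n + 1)) : Fin (n + 1) × Fin (n + 1) :=
  if p.1 = 0 then (0, p.2 - 1) else (p.1 - 1, p.2)

lemma combParent_rank_lt (p : Fin (n + 1) × Fin (n + 1)) (hp : p ≠ 0) :
    ((combParent p).1 : ℕ) + (combParent p).2 < (p.1 : ℕ) + p.2 := by
  unfold combParent
  split_ifs with h
  · have h2 : p.2 ≠ 0 := fun h2 ↦ hp (Prod.ext h h2)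
    simp only [h, Fin.val_zero, Fin.val_sub_one_of_ne_zero h2]
    have := Fin.pos_iff_ne_zero.2 h2
    omega
  · simp only [Fin.val_sub_one_of_ne_zero h]
    have := Fin.pos_iff_ne_zero.2 h
    omega

lemma edgeLength_boxPoint_combParent (hu : ‖u‖ = 1) {ν : ℝ} (hv : ‖v‖ = ν)
    {p : Fin (n + 1) × Fin (n + 1)} (hp : p ≠ 0) :
    edgeLength (boxPoint u v n) s(p, combParent p) = if p.1 = 0 then ν else 1 := by
  rw [edgeLength_mk, dist_eq_norm, boxPoint, boxPoint, combParent]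
  split_ifs with h
  · have h2 : p.2 ≠ 0 := fun h2 ↦ hp (Prod.ext h h2)
    have := Fin.pos_iff_ne_zero.2 h2
    rw [h, Fin.val_sub_one_of_ne_zero h2, Nat.cast_sub (by omega)]
    simpa [← sub_smul] using hv
  · have := Fin.pos_iff_ne_zero.2 h
    rw [Fin.val_sub_one_of_ne_zero h, Nat.cast_sub (by omega)]
    simpa [← sub_smul] using hu

lemma sum_edgeLength_comb [Fintype (parentGraph 0 (combParent (n := n))).edgeSet]
    (hu : ‖u‖ = 1) {ν : ℝ} (hv : ‖v‖ = ν) :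
    ∑ e ∈ (parentGraph 0 (combParent (n := n))).edgeFinset, edgeLength (boxPoint u v n) e
      = ((n : ℝ) + 1) * n + n * ν := by
  classical
  rw [sum_edgeFinset_parentGraph (rank := fun p ↦ (p.1 : ℕ) + p.2) combParent_rank_lt,
    sum_congr rfl fun p hp ↦ edgeLength_boxPoint_combParent hu hv (mem_erase.1 hp).1,
    sum_erase_eq_sub (mem_univ _)]
  simp [Fintype.sum_prod_type, Fin.sum_univ_succ, Fin.succ_ne_zero]
  ring

lemma le_sum_edgeLength_of_isTree {ν : ℝ} (hli : LinearIndependent ℝ ![u, v]) (hν : 1 ≤ ν)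
    (hushort : ∀ x ∈ latticeSet u v, x ≠ 0 → 1 ≤ ‖x‖)
    (hvshort : ∀ x ∈ latticeSet u v, (∀ i : ℤ, x ≠ i • u) → ν ≤ ‖x‖)
    {G : SimpleGraph (Fin (n + 1) × Fin (n + 1))} [Fintype G.edgeSet] (hG : G.IsTree) :
    ((n : ℝ) + 1) * n + n * ν ≤ ∑ e ∈ G.edgeFinset, edgeLength (boxPoint u v n) e := by
  classical
  have key := hG.le_sum_edgeFinset Prod.snd_surjective hν
    (w := edgeLength (boxPoint u v n))
    (fun e he ↦ by
      induction e with
      | _ p q => exact one_le_dist_boxPoint hli hushort (G.ne_of_adj he))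
    (fun e he hd ↦ by
      induction e with
      | _ p q => exact le_dist_boxPoint_of_snd_ne hli hvshort (by simpa using hd))
  simp only [Fintype.card_prod, Fintype.card_fin] at key
  push_cast at key
  linarith

end latticeBox

/-- Let `L = L(u,v)` with `‖u‖ = 1 ≤ ν = ‖v‖`, `‖x‖ ≥ 1` for every nonzero `x ∈ L` and
`‖x‖ ≥ ν` for every `x ∈ L` not in `ℤu`.  Then for every positive `n`, the `(n+1)²` points
`L_n = {αu + βv : 0 ≤ α, β ≤ n}` have a minimum spanning tree of length exactly
`(n+1)n + nν`. -/
theorem lattice_box_mst_length (u v : Pt) (ν : ℝ)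
    (hli : LinearIndependent ℝ ![u, v])
    (hu : ‖u‖ = 1) (hv : ‖v‖ = ν) (hν : 1 ≤ ν)
    (hushort : ∀ x ∈ latticeSet u v, x ≠ 0 → 1 ≤ ‖x‖)
    (hvshort : ∀ x ∈ latticeSet u v, (∀ i : ℤ, x ≠ i • u) → ν ≤ ‖x‖) :
    ∀ n : ℕ, 0 < n →
      mstLength dist (latticeBox u v n) = ((n : ℝ) + 1) * n + n * ν := by
  intro n _
  classical
  rw [latticeBox_eq_range, mstLength_range_eq_sInf (boxPoint_injective hli)]
  refine IsLeast.csInf_eq ⟨⟨parentGraph 0 combParent,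
    parentGraph_isTree (rank := fun p ↦ (p.1 : ℕ) + p.2) combParent_rank_lt,
    (sum_edgeLength_comb hu hv).symm⟩, ?_⟩
  rintro _ ⟨G, hG, rfl⟩
  exact le_sum_edgeLength_of_isTree hli hν hushort hvshort hG
end

section
/- Let L = L(u,v) be a lattice spanned by linearly independent u, v ∈ ℝ² with ‖u‖ = 1 and ‖v‖ = ν ≥ 1, where u is a shortest nonzero vector of L and v is a shortest vector of L not in ℝu. For each positive even integer n let L_n = { αu + βv : α, β ∈ {0,1,…,n} } and let B_n = L_n ∩ L(2u,2v) be the points of the index-4 sublattice spanned by 2u and 2v. Then for every ε > 0 there is an N such that for all even n ≥ N, the MST-ratio satisfies μ(L_n, B_n) ≥ 5/4 − ε. In particular, every 2-dimensional lattice has asymptotic maximum MST-ratio at least 1.25. -/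
/-!
Points of `B_n` are pairwise at distance `≥ 2` and points of `L_n ∖ B_n` at distance `≥ 1`,
since every nonzero lattice vector has length `≥ 1`; as a spanning tree on `k` points has
`k - 1` edges, `|MST(B_n)| ≥ 2(|B_n| - 1)` and `|MST(L_n ∖ B_n)| ≥ |L_n ∖ B_n| - 1`. On the
other hand the boustrophedon path through `L_n` is a spanning tree of length `≤ n(n+2) + nν`.
For `n = 2m` this gives `μ(L_n, B_n) ≥ (5m² + 6m - 1) / (4m² + 4m + 2mν)`, which tends to `5/4`.
-/

open Finset

namespace SimpleGraph

theorem pathGraph_isTree (k : ℕ) : (pathGraph (k + 1)).IsTree := by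
  refine ⟨pathGraph_connected k, isAcyclic_iff_forall_adj_isBridge.mpr ?_⟩
  suffices h : ∀ a b : Fin (k + 1), (a : ℕ) + 1 = b → (pathGraph (k + 1)).IsBridge s(a, b) by
    intro x y hxy
    rcases pathGraph_adj.mp hxy with hxy | hxy
    · exact h x y hxy
    · exact Sym2.eq_swap ▸ h y x hxy
  intro a b hab
  refine isBridge_iff.mpr fun hreach => ?_
  set H := (pathGraph (k + 1)).deleteEdges {s(a, b)}
  -- Without the edge `ab`, the initial segment `{x ≤ a}` is closed under adjacency.
  have hclosed : ∀ y, Relation.ReflTransGen H.Adj a y → (y : ℕ) ≤ a := by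
    intro y hy
    induction hy with
    | refl => exact le_rfl
    | tail _ hxy ih =>
      rw [deleteEdges_adj, pathGraph_adj, Set.mem_singleton_iff, Sym2.eq_iff] at hxy
      simp only [Fin.ext_iff] at hxy
      omega
  have := hclosed b ((reachable_iff_reflTransGen _ _).mp hreach)
  omega

end SimpleGraph

section MinimumSpanningTree

open SimpleGraph

variable {V : Type*} (d : V → V → ℝ)

theorem mstLength_coe (S : Finset V) : mstLength d (S : Set V) = mstLengthF d S := by
  rw [mstLength, dif_pos S.finite_toSet, Finset.finite_toSet_toFinset]

variable {d}

theorem treeWeight_nonneg (hd : ∀ x y, 0 ≤ d x y) (S : Finset V)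
    (G : SimpleGraph {x // x ∈ S}) : 0 ≤ treeWeight d S G := by
  unfold treeWeight
  refine mul_nonneg (by norm_num) (sum_nonneg fun x _ => sum_nonneg fun y _ => ?_)
  split_ifs
  exacts [hd _ _, le_rfl]

theorem mstLengthF_le_treeWeight (hd : ∀ x y, 0 ≤ d x y) {S : Finset V}
    {G : SimpleGraph {x // x ∈ S}} (hG : G.IsTree) : mstLengthF d S ≤ treeWeight d S G :=
  csInf_le ⟨0, by rintro _ ⟨G, -, rfl⟩; exact treeWeight_nonneg hd S G⟩ ⟨G, hG, rfl⟩

theorem mul_card_edgeFinset_le_treeWeight {c : ℝ} {S : Finset V} (G : SimpleGraph {x // x ∈ S})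
    [DecidableRel G.Adj] (hd : ∀ x y, G.Adj x y → c ≤ d x y) :
    c * #G.edgeFinset ≤ treeWeight d S G := by
  classical
  have hdeg : ∀ x, ∑ y, (if G.Adj x y then c else 0) = G.degree x * c := by
    intro x
    rw [← sum_filter, sum_const, nsmul_eq_mul, ← card_neighborFinset_eq_degree,
      ← neighborFinset_eq_filter]
  calc c * #G.edgeFinset
      = 1 / 2 * ∑ x, ∑ y, (if G.Adj x y then c else 0) := by
        simp_rw [hdeg, ← sum_mul]
        rw [← Nat.cast_sum, sum_degrees_eq_twice_card_edges]
        push_cast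
        ring
    _ ≤ treeWeight d S G := by
        unfold treeWeight
        gcongr with x _ y _
        split_ifs with h
        exacts [hd x y h, le_rfl]

theorem mul_card_sub_one_le_mstLengthF {c : ℝ} (hc : 0 ≤ c) {S : Finset V}
    (hd : ∀ x ∈ S, ∀ y ∈ S, x ≠ y → c ≤ d x y) : c * (#S - 1) ≤ mstLengthF d S := by
  classical
  rcases S.eq_empty_or_nonempty with rfl | hS
  · refine le_trans ?_ (Real.sInf_nonneg ?_)
    · simp only [card_empty, CharP.cast_eq_zero, zero_sub, mul_neg, mul_one, neg_nonpos, hc]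
    · rintro _ ⟨G, -, rfl⟩
      simp [treeWeight]
  · have : Nonempty {x // x ∈ S} := hS.to_subtype
    obtain ⟨T, -, hT⟩ := (connected_top (V := {x // x ∈ S})).exists_isTree_le
    refine le_csInf ⟨_, T, hT, rfl⟩ ?_
    rintro _ ⟨G, hG, rfl⟩
    have hcard : (#G.edgeFinset : ℝ) = #S - 1 := by
      rw [eq_sub_iff_add_eq, ← Fintype.card_coe S]
      exact_mod_cast hG.card_edgeFinset
    rw [← hcard]
    exact mul_card_edgeFinset_le_treeWeight G fun x y hxy =>
      hd x x.2 y y.2 (Subtype.coe_injective.ne hxy.ne)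

theorem treeWeight_comap_equiv {ι : Type*} [Fintype ι] {S : Finset V} (e : ι ≃ {x // x ∈ S})
    (H : SimpleGraph ι) [DecidableRel H.Adj] :
    treeWeight d S (H.comap e.symm)
      = 1 / 2 * ∑ i, ∑ j, if H.Adj i j then d (e i) (e j) else 0 := by
  unfold treeWeight
  rw [← e.sum_comp]
  refine congrArg _ (sum_congr rfl fun i _ => ?_)
  rw [← e.sum_comp]
  simp

theorem sum_range_sum_range_ite_adjacent (k : ℕ) (g : ℕ → ℕ → ℝ)
    (hg : ∀ i j, g i j = g j i) :
    ∑ i ∈ range (k + 1), ∑ j ∈ range (k + 1), (if i + 1 = j ∨ j + 1 = i then g i j else 0)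
      = 2 * ∑ i ∈ range k, g i (i + 1) := by
  have hsplit : ∀ i j, (if i + 1 = j ∨ j + 1 = i then g i j else 0)
      = (if i + 1 = j then g i j else 0) + (if j + 1 = i then g j i else 0) := by
    intro i j
    rw [hg j i]
    by_cases h₁ : i + 1 = j
    · have h₂ : ¬j + 1 = i := by omega
      simp [h₁, h₂]
    · simp [h₁]
  have hsucc : ∑ i ∈ range (k + 1), ∑ j ∈ range (k + 1), (if i + 1 = j then g i j else 0)
      = ∑ i ∈ range k, g i (i + 1) := by
    simp_rw [sum_ite_eq, mem_range, sum_range_succ _ k, lt_irrefl, if_false, add_zero]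
    exact sum_congr rfl fun i hi => if_pos (by simpa using hi)
  simp_rw [hsplit, sum_add_distrib]
  rw [sum_comm (f := fun i j => if j + 1 = i then g j i else 0), hsucc]
  ring

theorem mstLengthF_image_le_sum_dist [DecidableEq V] (hd : ∀ x y, 0 ≤ d x y)
    (hsymm : ∀ x y, d x y = d y x) {f : ℕ → V} {k : ℕ} (hf : Set.InjOn f (range (k + 1))) :
    mstLengthF d ((range (k + 1)).image f) ≤ ∑ i ∈ range k, d (f i) (f (i + 1)) := by
  set S := (range (k + 1)).image f
  let e : Fin (k + 1) ≃ {x // x ∈ S} := Equiv.ofBijective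
    (fun i => ⟨f i, mem_image_of_mem f (mem_range.mpr i.2)⟩)
    ⟨fun i j hij =>
      Fin.ext (hf (mem_range.mpr i.2) (mem_range.mpr j.2) (congrArg Subtype.val hij)),
      fun ⟨x, hx⟩ => by
        obtain ⟨i, hi, rfl⟩ := mem_image.mp hx
        exact ⟨⟨i, mem_range.mp hi⟩, rfl⟩⟩
  have hT : ((pathGraph (k + 1)).comap e.symm).IsTree :=
    (Iso.comap e.symm _).isTree_iff.mpr (pathGraph_isTree k)
  refine (mstLengthF_le_treeWeight hd hT).trans_eq ?_
  classical
  rw [treeWeight_comap_equiv]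
  have he : ∀ i, (e i : V) = f i := fun _ => rfl
  simp only [pathGraph_adj, he, fun i : ℕ => Fin.sum_univ_eq_sum_range
    (fun j => if i + 1 = j ∨ j + 1 = i then d (f i) (f j) else 0) (k + 1)]
  rw [Fin.sum_univ_eq_sum_range (fun i => ∑ j ∈ range (k + 1),
      if i + 1 = j ∨ j + 1 = i then d (f i) (f j) else 0),
    sum_range_sum_range_ite_adjacent k (fun i j => d (f i) (f j)) fun i j => hsymm _ _]
  ring

end MinimumSpanningTree

section Snake

/-- Boustrophedon enumeration of the grid `{0,…,n}²`, one row after the other. -/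
def snake (n i : ℕ) : ℕ × ℕ :=
  (if Even (i / (n + 1)) then i % (n + 1) else n - i % (n + 1), i / (n + 1))

theorem snake_injective (n : ℕ) : Function.Injective (snake n) := by
  intro i j hij
  simp only [snake, Prod.mk.injEq] at hij
  obtain ⟨hcol, hrow⟩ := hij
  have hi := Nat.mod_lt i (Nat.add_one_pos n)
  have hj := Nat.mod_lt j (Nat.add_one_pos n)
  have hmod : i % (n + 1) = j % (n + 1) := by
    rw [hrow] at hcol
    split_ifs at hcol <;> omega
  rw [← Nat.div_add_mod i (n + 1), ← Nat.div_add_mod j (n + 1), hrow, hmod]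

theorem snake_mem_range_product {n i : ℕ} (hi : i < (n + 1) * (n + 1)) :
    snake n i ∈ range (n + 1) ×ˢ range (n + 1) := by
  have hrow : i / (n + 1) < n + 1 := Nat.div_lt_of_lt_mul hi
  have hcol := Nat.mod_lt i (Nat.add_one_pos n)
  simp only [snake, mem_product, mem_range]
  split_ifs <;> omega

theorem image_snake_range (n : ℕ) :
    (range ((n + 1) * (n + 1))).image (snake n) = range (n + 1) ×ˢ range (n + 1) := by
  refine eq_of_subset_of_card_le (fun p hp => ?_) ?_
  · obtain ⟨i, hi, rfl⟩ := mem_image.mp hp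
    exact snake_mem_range_product (mem_range.mp hi)
  · rw [card_image_of_injective _ (snake_injective n), card_product, card_range, card_range]

theorem abs_snake_fst_succ_sub_le (n i : ℕ) :
    |((snake n (i + 1)).1 : ℤ) - (snake n i).1| ≤ 1 := by
  have hpos := Nat.add_one_pos n
  have hr := Nat.mod_lt i hpos
  have hdecomp := Nat.mod_add_div i (n + 1)
  simp only [snake]
  rcases Nat.lt_or_ge (i % (n + 1)) n with hlt | hge
  · obtain ⟨hq, hr'⟩ :
        (i + 1) / (n + 1) = i / (n + 1) ∧ (i + 1) % (n + 1) = i % (n + 1) + 1 :=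
      (Nat.div_mod_unique hpos).mpr ⟨by omega, by omega⟩
    rw [hq, hr', abs_le]
    split_ifs <;> omega
  · obtain ⟨hq, hr'⟩ : (i + 1) / (n + 1) = i / (n + 1) + 1 ∧ (i + 1) % (n + 1) = 0 :=
      (Nat.div_mod_unique hpos).mpr ⟨by rw [mul_add]; omega, hpos⟩
    simp only [hq, hr', Nat.even_add_one, abs_le]
    split_ifs <;> omega

end Snake

section LatticeBoxFinset

variable {E : Type*} [NormedAddCommGroup E] [NormedSpace ℝ E] {u v : E}

def latticePoint (u v : E) (p : ℕ × ℕ) : E := (p.1 : ℝ) • u + (p.2 : ℝ) • v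

noncomputable def latticeBoxFinset [DecidableEq E] (u v : E) (n : ℕ) : Finset E :=
  (range (n + 1) ×ˢ range (n + 1)).image (latticePoint u v)

theorem latticePoint_sub (p q : ℕ × ℕ) :
    latticePoint u v p - latticePoint u v q
      = ((p.1 : ℝ) - q.1) • u + ((p.2 : ℝ) - q.2) • v := by
  simp only [latticePoint, sub_smul]
  abel

theorem latticePoint_injective (hli : LinearIndependent ℝ ![u, v]) :
    Function.Injective (latticePoint u v) := by
  intro p q hpq
  obtain ⟨h₁, h₂⟩ := hli.eq_of_pair hpq
  exact Prod.ext (Nat.cast_injective h₁) (Nat.cast_injective h₂)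

theorem card_latticeBoxFinset [DecidableEq E] (hli : LinearIndependent ℝ ![u, v]) (n : ℕ) :
    #(latticeBoxFinset u v n) = (n + 1) ^ 2 := by
  rw [latticeBoxFinset, card_image_of_injective _ (latticePoint_injective hli), card_product,
    card_range, sq]

theorem dist_latticePoint_snake_succ_le (u v : E) (n i : ℕ) :
    dist (latticePoint u v (snake n i)) (latticePoint u v (snake n (i + 1)))
      ≤ ‖u‖ + (((snake n (i + 1)).2 : ℝ) - (snake n i).2) * ‖v‖ := by
  have hcol : |((snake n (i + 1)).1 : ℝ) - (snake n i).1| ≤ 1 := by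
    exact_mod_cast abs_snake_fst_succ_sub_le n i
  have hrow : (0 : ℝ) ≤ (snake n (i + 1)).2 - (snake n i).2 :=
    sub_nonneg.mpr (Nat.cast_le.mpr (Nat.div_le_div_right i.le_succ))
  rw [dist_comm, dist_eq_norm, latticePoint_sub]
  refine (norm_add_le _ _).trans ?_
  rw [norm_smul, norm_smul, Real.norm_eq_abs, Real.norm_eq_abs, abs_of_nonneg hrow]
  gcongr
  exact mul_le_of_le_one_left (norm_nonneg u) hcol

theorem mstLengthF_latticeBoxFinset_le [DecidableEq E] (hli : LinearIndependent ℝ ![u, v])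
    (n : ℕ) :
    mstLengthF dist (latticeBoxFinset u v n) ≤ (n * (n + 2) : ℕ) * ‖u‖ + n * ‖v‖ := by
  have hbox : latticeBoxFinset u v n
      = (range (n * (n + 2) + 1)).image (latticePoint u v ∘ snake n) := by
    rw [← image_image, show n * (n + 2) + 1 = (n + 1) * (n + 1) by ring, image_snake_range]
    rfl
  have hlast : (snake n (n * (n + 2))).2 = n :=
    (Nat.div_mod_unique (Nat.add_one_pos n)).mpr ⟨by ring, Nat.lt_succ_self n⟩ |>.1
  rw [hbox]
  refine (mstLengthF_image_le_sum_dist (fun _ _ => dist_nonneg) dist_comm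
    ((latticePoint_injective hli).comp (snake_injective n)).injOn).trans ?_
  calc _ ≤ ∑ i ∈ range (n * (n + 2)),
          (‖u‖ + (((snake n (i + 1)).2 : ℝ) - (snake n i).2) * ‖v‖) :=
        sum_le_sum fun i _ => dist_latticePoint_snake_succ_le u v n i
    _ = _ := by
        rw [sum_add_distrib, ← sum_mul, sum_range_sub (fun i => ((snake n i).2 : ℝ)), hlast]
        simp [snake]

end LatticeBoxFinset

section PlaneLattice

variable {u v : Pt}

theorem coe_latticeBoxFinset (u v : Pt) (n : ℕ) :
    (latticeBoxFinset u v n : Set Pt) = latticeBox u v n := by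
  ext x
  simp only [latticeBoxFinset, coe_image, coe_product, coe_range, Set.mem_image, Set.mem_prod,
    Set.mem_Iio, Prod.exists, latticePoint, latticeBox, Set.mem_ofPred_eq]
  constructor
  · rintro ⟨a, b, ⟨ha, hb⟩, rfl⟩
    exact ⟨a, b, by omega, by omega, rfl⟩
  · rintro ⟨a, b, ha, hb, rfl⟩
    exact ⟨a, b, ⟨by omega, by omega⟩, rfl⟩

theorem latticeBox_inter_latticeSet_two_smul (hli : LinearIndependent ℝ ![u, v]) (m : ℕ) :
    latticeBox u v (m + m) ∩ latticeSet ((2 : ℝ) • u) ((2 : ℝ) • v)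
      = latticeBox ((2 : ℝ) • u) ((2 : ℝ) • v) m := by
  ext x
  constructor
  · rintro ⟨⟨α, β, hα, hβ, rfl⟩, i, j, h⟩
    rw [← Int.cast_smul_eq_zsmul ℝ, ← Int.cast_smul_eq_zsmul ℝ, smul_smul, smul_smul] at h
    obtain ⟨hαi, hβj⟩ := hli.eq_of_pair h
    have hαi' : (α : ℤ) = i * 2 := by exact_mod_cast hαi
    have hβj' : (β : ℤ) = j * 2 := by exact_mod_cast hβj
    obtain ⟨a, rfl⟩ : ∃ a, α = 2 * a := ⟨i.toNat, by omega⟩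
    obtain ⟨b, rfl⟩ : ∃ b, β = 2 * b := ⟨j.toNat, by omega⟩
    refine ⟨a, b, by omega, by omega, ?_⟩
    push_cast
    module
  · rintro ⟨a, b, ha, hb, rfl⟩
    refine ⟨⟨2 * a, 2 * b, by omega, by omega, by push_cast; module⟩, a, b, ?_⟩
    rw [← Int.cast_smul_eq_zsmul ℝ, ← Int.cast_smul_eq_zsmul ℝ]
    push_cast
    rfl

theorem abs_le_dist_of_mem_latticeBoxFinset_smul
    (hushort : ∀ x ∈ latticeSet u v, x ≠ 0 → 1 ≤ ‖x‖) (c : ℝ) {n : ℕ} {x y : Pt}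
    (hx : x ∈ latticeBoxFinset (c • u) (c • v) n)
    (hy : y ∈ latticeBoxFinset (c • u) (c • v) n)
    (hxy : x ≠ y) : |c| ≤ dist x y := by
  obtain ⟨p, -, rfl⟩ := mem_image.mp hx
  obtain ⟨q, -, rfl⟩ := mem_image.mp hy
  set w : Pt := (((p.1 : ℤ) - q.1 : ℤ) : ℝ) • u + (((p.2 : ℤ) - q.2 : ℤ) : ℝ) • v
  have hw : w ∈ latticeSet u v :=
    ⟨p.1 - q.1, p.2 - q.2, by simp only [w, Int.cast_smul_eq_zsmul]⟩
  have hdiff :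
      latticePoint (c • u) (c • v) p - latticePoint (c • u) (c • v) q = c • w := by
    rw [latticePoint_sub]
    push_cast [w]
    module
  have hw0 : w ≠ 0 := fun h => hxy (sub_eq_zero.mp (by rw [hdiff, h, smul_zero]))
  rw [dist_eq_norm, hdiff, norm_smul, Real.norm_eq_abs]
  exact le_mul_of_one_le_right (abs_nonneg c) (hushort w hw hw0)

theorem div_le_mstRatio_latticeBox (hli : LinearIndependent ℝ ![u, v]) (hu : ‖u‖ = 1)
    (hushort : ∀ x ∈ latticeSet u v, x ≠ 0 → 1 ≤ ‖x‖) {m : ℕ} (hm : 1 ≤ m) :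
    (5 * m ^ 2 + 6 * m - 1 : ℝ) / (2 * m * (2 * m + 2) + 2 * m * ‖v‖)
      ≤ mstRatio dist (latticeBox u v (m + m))
          (latticeBox u v (m + m) ∩ latticeSet ((2 : ℝ) • u) ((2 : ℝ) • v)) := by
  set A := latticeBoxFinset u v (m + m)
  set B := latticeBoxFinset ((2 : ℝ) • u) ((2 : ℝ) • v) m
  have hA : (A : Set Pt) = latticeBox u v (m + m) := coe_latticeBoxFinset u v (m + m)
  have hB : latticeBox u v (m + m) ∩ latticeSet ((2 : ℝ) • u) ((2 : ℝ) • v) = B := by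
    rw [latticeBox_inter_latticeSet_two_smul hli, coe_latticeBoxFinset]
  have hBA : B ⊆ A := by
    rw [← coe_subset, hA, ← hB]
    exact Set.inter_subset_left
  rw [mstRatio, hB, ← hA, ← coe_sdiff, mstLength_coe, mstLength_coe, mstLength_coe]
  have hcardA : (#A : ℝ) = (2 * m + 1) ^ 2 := by
    rw [card_latticeBoxFinset hli]
    push_cast
    ring
  have hcardB : (#B : ℝ) = (m + 1) ^ 2 := by
    rw [card_latticeBoxFinset ((LinearIndependent.pair_smul_iff two_ne_zero).mpr hli)]
    push_cast
    ring
  have hcardAB : (#(A \ B) : ℝ) = #A - #B := by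
    rw [card_sdiff_of_subset hBA, Nat.cast_sub (card_le_card hBA)]
  have hsepA : ∀ x ∈ A, ∀ y ∈ A, x ≠ y → 1 ≤ dist x y := fun x hx y hy hxy => by
    simpa using abs_le_dist_of_mem_latticeBoxFinset_smul hushort 1
      (by rwa [one_smul, one_smul]) (by rwa [one_smul, one_smul]) hxy
  have hlowA := mul_card_sub_one_le_mstLengthF zero_le_one hsepA
  have hlowB := mul_card_sub_one_le_mstLengthF (S := B) zero_le_two fun x hx y hy hxy => by
    simpa using abs_le_dist_of_mem_latticeBoxFinset_smul hushort 2 hx hy hxy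
  have hlowAB := mul_card_sub_one_le_mstLengthF (S := A \ B) zero_le_one fun x hx y hy =>
    hsepA x (sdiff_subset hx) y (sdiff_subset hy)
  have hup := mstLengthF_latticeBoxFinset_le hli (m + m)
  rw [hu] at hup
  push_cast at hup
  simp only [hcardAB, hcardA, hcardB] at hlowA hlowB hlowAB
  have hm' : (1 : ℝ) ≤ m := by exact_mod_cast hm
  apply div_le_div₀ <;> nlinarith

end PlaneLattice

theorem five_quarters_sub_le_div {x ν ε : ℝ} (hx : 1 ≤ x) (hν : 0 ≤ ν)
    (h : 2 * (ν + 1) ≤ ε * x) :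
    5 / 4 - ε ≤ (5 * x ^ 2 + 6 * x - 1) / (2 * x * (2 * x + 2) + 2 * x * ν) := by
  have hε : 0 ≤ ε := by nlinarith
  rw [le_div_iff₀ (by positivity)]
  nlinarith [mul_le_mul_of_nonneg_left h (by linarith : 0 ≤ 4 * x),
    mul_nonneg hε (by positivity : 0 ≤ 4 * x + 2 * x * ν)]

theorem lattice_infmax_lower_general (u v : Pt)
    (hli : LinearIndependent ℝ ![u, v])
    (hu : ‖u‖ = 1)
    (hushort : ∀ x ∈ latticeSet u v, x ≠ 0 → 1 ≤ ‖x‖) :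
    ∀ ε : ℝ, 0 < ε → ∃ N : ℕ, ∀ n : ℕ, Even n → N ≤ n →
      mstRatio dist (latticeBox u v n)
        (latticeBox u v n ∩ latticeSet ((2 : ℝ) • u) ((2 : ℝ) • v)) ≥ 5 / 4 - ε := by
  intro ε hε
  refine ⟨2 * ⌈2 * (‖v‖ + 1) / ε⌉₊ + 2, ?_⟩
  rintro n ⟨m, rfl⟩ hN
  have hm : ⌈2 * (‖v‖ + 1) / ε⌉₊ + 1 ≤ m := by omega
  have hεm : 2 * (‖v‖ + 1) ≤ ε * m := by
    have h := (Nat.le_ceil (2 * (‖v‖ + 1) / ε)).trans (Nat.cast_le.mpr (Nat.le_of_succ_le hm))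
    rw [div_le_iff₀ hε] at h
    linarith
  have hm1 : 1 ≤ m := by omega
  exact (five_quarters_sub_le_div (by exact_mod_cast hm1) (norm_nonneg v) hεm).trans
    (div_le_mstRatio_latticeBox hli hu hushort hm1)

/-- Let `L = L(u,v)` with `‖u‖ = 1 ≤ ν = ‖v‖`, where `u` is a shortest nonzero lattice
vector and `v` a shortest lattice vector outside `ℝu`.  With `B_n = L_n ∩ L(2u, 2v)` the
points of the index-4 sublattice, for every `ε > 0` there is `N` such that for all even
`n ≥ N` the MST-ratio satisfies `μ(L_n, B_n) ≥ 5/4 - ε`. -/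
theorem lattice_infmax_lower (u v : Pt) (ν : ℝ)
    (hli : LinearIndependent ℝ ![u, v])
    (hu : ‖u‖ = 1) (hv : ‖v‖ = ν) (hν : 1 ≤ ν)
    (hushort : ∀ x ∈ latticeSet u v, x ≠ 0 → 1 ≤ ‖x‖)
    (hvshort : ∀ x ∈ latticeSet u v, (∀ t : ℝ, x ≠ t • u) → ν ≤ ‖x‖) :
    ∀ ε : ℝ, 0 < ε → ∃ N : ℕ, ∀ n : ℕ, Even n → N ≤ n →
      mstRatio dist (latticeBox u v n)
        (latticeBox u v n ∩ latticeSet ((2 : ℝ) • u) ((2 : ℝ) • v)) ≥ 5 / 4 - ε :=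
  lattice_infmax_lower_general u v hli hu hushort
end
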